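/- arXiv:1304.2948 — 2 statements merged into one kernel-verified Lean document; each statement's English description precedes it below -/
import Mathlib

section
/- In the circular Petri net with places A₁,…,Aₙ,B₁,…,Bₙ and transitions t₁,…,tₙ where tᵢ consumes one token from Aᵢ and one from Bᵢ and produces one token in A_{i+1} and one in B_{i+1} (indices mod n), a set of places S is a minimal siphon if and only if for each i, S contains exactly one of Aᵢ and Bᵢ. Consequently there are exactly 2ⁿ minimal siphons. -/
/-- Predecessor transitions of a set of places: transitions with an arc into some place of S. -/
def predT {P T : Type*} (Wtp : T → P → ℕ) (S : Set P) : Set T :=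
  {t | ∃ p ∈ S, 0 < Wtp t p}

/-- Successor transitions of a set of places: transitions with an arc from some place of S. -/
def succT {P T : Type*} (Wpt : P → T → ℕ) (S : Set P) : Set T :=
  {t | ∃ p ∈ S, 0 < Wpt p t}

/-- A siphon: a nonempty set of places whose predecessors are among its successors. -/
def IsSiphon {P T : Type*} (Wpt : P → T → ℕ) (Wtp : T → P → ℕ) (S : Set P) : Prop :=
  S.Nonempty ∧ predT Wtp S ⊆ succT Wpt S

/-- A trap: a nonempty set of places whose successors are among its predecessors. -/
def IsTrap {P T : Type*} (Wpt : P → T → ℕ) (Wtp : T → P → ℕ) (S : Set P) : Prop :=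
  S.Nonempty ∧ succT Wpt S ⊆ predT Wtp S

/-- Transition step of a Petri net. -/
def Step {P T : Type*} (Wpt : P → T → ℕ) (Wtp : T → P → ℕ)
    (m m' : P → ℕ) (t : T) : Prop :=
  (∀ p, Wpt p t ≤ m p) ∧ ∀ p, m' p = m p - Wpt p t + Wtp t p

/-- Step along a finite sequence of transitions. -/
def StepSeq {P T : Type*} (Wpt : P → T → ℕ) (Wtp : T → P → ℕ) :
    (P → ℕ) → (P → ℕ) → List T → Prop
  | m, m', [] => m' = m
  | m, m', t :: σ => ∃ m₁, Step Wpt Wtp m m₁ t ∧ StepSeq Wpt Wtp m₁ m' σ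

/-- A minimal siphon: a siphon containing no siphon as a proper subset. -/
def IsMinimalSiphon {P T : Type*} (Wpt : P → T → ℕ) (Wtp : T → P → ℕ) (S : Set P) : Prop :=
  IsSiphon Wpt Wtp S ∧ ∀ S' ⊆ S, IsSiphon Wpt Wtp S' → S' = S

/-- A minimal trap: a trap containing no trap as a proper subset. -/
def IsMinimalTrap {P T : Type*} (Wpt : P → T → ℕ) (Wtp : T → P → ℕ) (S : Set P) : Prop :=
  IsTrap Wpt Wtp S ∧ ∀ S' ⊆ S, IsTrap Wpt Wtp S' → S' = S

/-- Weights of the circular net: place Aᵢ = Sum.inl i, Bᵢ = Sum.inr i;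
transition tᵢ consumes from Aᵢ and Bᵢ. -/
def circWpt (n : ℕ) : (ZMod n ⊕ ZMod n) → ZMod n → ℕ :=
  fun p t => match p with
  | Sum.inl i => if i = t then 1 else 0
  | Sum.inr i => if i = t then 1 else 0

/-- Transition tᵢ produces into A_{i+1} and B_{i+1}. -/
def circWtp (n : ℕ) : ZMod n → (ZMod n ⊕ ZMod n) → ℕ :=
  fun t p => match p with
  | Sum.inl i => if i = t + 1 then 1 else 0
  | Sum.inr i => if i = t + 1 then 1 else 0

section Aux
open Sum
variable {n : ℕ}

lemma mem_predT_circ (S : Set (ZMod n ⊕ ZMod n)) (t : ZMod n) :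
    t ∈ predT (circWtp n) S ↔ (Sum.inl (t+1) ∈ S ∨ Sum.inr (t+1) ∈ S) := by
  constructor
  · rintro ⟨p, hp, hw⟩
    rcases p with i | i
    · simp only [circWtp] at hw
      split at hw
      · rename_i h; subst h; exact Or.inl hp
      · omega
    · simp only [circWtp] at hw
      split at hw
      · rename_i h; subst h; exact Or.inr hp
      · omega
  · rintro (h | h)
    · exact ⟨_, h, by simp [circWtp]⟩
    · exact ⟨_, h, by simp [circWtp]⟩

lemma mem_succT_circ (S : Set (ZMod n ⊕ ZMod n)) (t : ZMod n) :
    t ∈ succT (circWpt n) S ↔ (Sum.inl t ∈ S ∨ Sum.inr t ∈ S) := by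
  constructor
  · rintro ⟨p, hp, hw⟩
    rcases p with i | i
    · simp only [circWpt] at hw
      split at hw
      · rename_i h; subst h; exact Or.inl hp
      · omega
    · simp only [circWpt] at hw
      split at hw
      · rename_i h; subst h; exact Or.inr hp
      · omega
  · rintro (h | h)
    · exact ⟨_, h, by simp [circWpt]⟩
    · exact ⟨_, h, by simp [circWpt]⟩

lemma siphon_iff_circ (hn : 0 < n) (S : Set (ZMod n ⊕ ZMod n)) :
    IsSiphon (circWpt n) (circWtp n) S ↔
      ∀ i : ZMod n, Sum.inl i ∈ S ∨ Sum.inr i ∈ S := by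
  haveI : NeZero n := ⟨hn.ne'⟩
  constructor
  · rintro ⟨⟨p, hp⟩, hsub⟩
    set Q : ZMod n → Prop := fun i => Sum.inl i ∈ S ∨ Sum.inr i ∈ S with hQ
    have hstep : ∀ i, Q (i + 1) → Q i := by
      intro i h
      exact (mem_succT_circ S i).1 (hsub ((mem_predT_circ S i).2 h))
    have hex : ∃ i, Q i := by
      rcases p with i | i
      · exact ⟨i, Or.inl hp⟩
      · exact ⟨i, Or.inr hp⟩
    obtain ⟨i, hi⟩ := hex
    have key : ∀ k : ℕ, Q (i - k) := by
      intro k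
      induction k with
      | zero => simpa using hi
      | succ k ih =>
        apply hstep
        have : i - (↑(k + 1) : ZMod n) + 1 = i - k := by push_cast; ring
        rw [this]; exact ih
    intro j
    obtain ⟨k, hk⟩ := ZMod.natCast_zmod_surjective (n := n) (i - j)
    have : i - (k : ZMod n) = j := by rw [hk]; ring
    have := key k
    rwa [‹i - (k : ZMod n) = j›] at this
  · intro h
    constructor
    · rcases h 0 with h0 | h0
      · exact ⟨_, h0⟩
      · exact ⟨_, h0⟩
    · intro t _
      exact (mem_succT_circ S t).2 (h t)

lemma minimal_iff_circ (hn : 0 < n) (S : Set (ZMod n ⊕ ZMod n)) :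
    IsMinimalSiphon (circWpt n) (circWtp n) S ↔
      ∀ i : ZMod n,
        (Sum.inl i ∈ S ∧ Sum.inr i ∉ S) ∨ (Sum.inl i ∉ S ∧ Sum.inr i ∈ S) := by
  constructor
  · rintro ⟨hS, hmin⟩
    have hQ := (siphon_iff_circ hn S).1 hS
    set S' : Set (ZMod n ⊕ ZMod n) :=
      {p | Sum.elim (fun i => Sum.inl i ∈ S) (fun i => Sum.inl i ∉ S) p} with hS'def
    have hsub : S' ⊆ S := by
      rintro (i | i) hp
      · exact hp
      · rcases hQ i with h | h
        · exact absurd h hp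
        · exact h
    have hS'siphon : IsSiphon (circWpt n) (circWtp n) S' := by
      rw [siphon_iff_circ hn]
      intro i
      by_cases h : Sum.inl i ∈ S
      · exact Or.inl h
      · exact Or.inr h
    have heq : S' = S := hmin S' hsub hS'siphon
    intro i
    by_cases h : Sum.inl i ∈ S
    · refine Or.inl ⟨h, ?_⟩
      have : Sum.inr i ∉ S' := by simp [hS'def, h]
      rwa [heq] at this
    · refine Or.inr ⟨h, ?_⟩
      have : Sum.inr i ∈ S' := by simp [hS'def, h]
      rwa [heq] at this
  · intro h
    constructor
    · rw [siphon_iff_circ hn]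
      intro i
      rcases h i with ⟨h1, _⟩ | ⟨_, h2⟩
      · exact Or.inl h1
      · exact Or.inr h2
    · intro S' hsub hS'
      have hQ' := (siphon_iff_circ hn S').1 hS'
      ext p
      constructor
      · exact fun hp => hsub hp
      · rintro hp
        rcases p with i | i
        · rcases hQ' i with h' | h'
          · exact h'
          · rcases h i with ⟨_, h2⟩ | ⟨h1, _⟩
            · exact absurd (hsub h') h2
            · exact absurd hp h1
        · rcases hQ' i with h' | h'
          · rcases h i with ⟨_, h2⟩ | ⟨h1, _⟩
            · exact absurd hp h2
            · exact absurd (hsub h') h1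
          · exact h'

end Aux

/-- In the circular Petri net, S is a minimal siphon iff it contains exactly
one of Aᵢ, Bᵢ for each i; consequently there are exactly 2ⁿ minimal siphons. -/
theorem circular_minimal_siphons (n : ℕ) (hn : 0 < n) :
    (∀ S : Set (ZMod n ⊕ ZMod n),
      IsMinimalSiphon (circWpt n) (circWtp n) S ↔
        ∀ i : ZMod n,
          (Sum.inl i ∈ S ∧ Sum.inr i ∉ S) ∨ (Sum.inl i ∉ S ∧ Sum.inr i ∈ S)) ∧
    {S : Set (ZMod n ⊕ ZMod n) | IsMinimalSiphon (circWpt n) (circWtp n) S}.ncard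
      = 2 ^ n := by
  haveI : NeZero n := ⟨hn.ne'⟩
  classical
  refine ⟨fun S => minimal_iff_circ hn S, ?_⟩
  have hset : {S : Set (ZMod n ⊕ ZMod n) | IsMinimalSiphon (circWpt n) (circWtp n) S}
      = Set.range (fun g : ZMod n → Bool =>
          {p : ZMod n ⊕ ZMod n | Sum.elim (fun i => g i = true) (fun i => g i = false) p}) := by
    ext S
    rw [Set.mem_setOf_eq, minimal_iff_circ hn]
    constructor
    · intro h
      refine ⟨fun i => decide (Sum.inl i ∈ S), ?_⟩
      ext p
      rcases p with i | i
      · simp [decide_eq_true_iff]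
      · simp only [Set.mem_setOf_eq, Sum.elim_inr, decide_eq_false_iff_not]
        rcases h i with ⟨h1, h2⟩ | ⟨h1, h2⟩
        · simp [h1, h2]
        · simp [h1, h2]
    · rintro ⟨g, rfl⟩ i
      by_cases hg : g i
      · exact Or.inl ⟨by simp [hg], by simp [hg]⟩
      · exact Or.inr ⟨by simp [hg], by simp [hg]⟩
  have hinj : Function.Injective (fun g : ZMod n → Bool =>
      {p : ZMod n ⊕ ZMod n | Sum.elim (fun i => g i = true) (fun i => g i = false) p}) := by
    intro g g' hgg
    funext i
    have := Set.ext_iff.1 hgg (Sum.inl i)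
    simp only [Set.mem_setOf_eq, Sum.elim_inl] at this
    by_cases h : g i
    · simp [h, this.1 h]
    · by_cases h' : g' i
      · exact absurd (this.2 h') h
      · simp [h, h']
  rw [hset, ← Nat.card_coe_set_eq, Nat.card_range_of_injective hinj,
    Nat.card_eq_fintype_card, Fintype.card_fun, ZMod.card, Fintype.card_bool]
end

section
/- In the same circular Petri net, every minimal trap also consists of exactly one of Aᵢ, Bᵢ for each i, so there are exactly 2ⁿ minimal traps. -/
namespace CircAux

variable {n : ℕ}

lemma mem_succT (S : Set (ZMod n ⊕ ZMod n)) (t : ZMod n) :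
    t ∈ succT (circWpt n) S ↔ Sum.inl t ∈ S ∨ Sum.inr t ∈ S := by
  constructor
  · rintro ⟨p, hp, hw⟩
    rcases p with i | i
    · left
      simp only [circWpt] at hw
      by_cases h : i = t
      · subst h; exact hp
      · simp [h] at hw
    · right
      simp only [circWpt] at hw
      by_cases h : i = t
      · subst h; exact hp
      · simp [h] at hw
  · rintro (h | h)
    · exact ⟨Sum.inl t, h, by simp [circWpt]⟩
    · exact ⟨Sum.inr t, h, by simp [circWpt]⟩

lemma mem_predT (S : Set (ZMod n ⊕ ZMod n)) (t : ZMod n) :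
    t ∈ predT (circWtp n) S ↔ Sum.inl (t + 1) ∈ S ∨ Sum.inr (t + 1) ∈ S := by
  constructor
  · rintro ⟨p, hp, hw⟩
    rcases p with i | i
    · left
      simp only [circWtp] at hw
      by_cases h : i = t + 1
      · subst h; exact hp
      · simp [h] at hw
    · right
      simp only [circWtp] at hw
      by_cases h : i = t + 1
      · subst h; exact hp
      · simp [h] at hw
  · rintro (h | h)
    · exact ⟨Sum.inl (t + 1), h, by simp [circWtp]⟩
    · exact ⟨Sum.inr (t + 1), h, by simp [circWtp]⟩

lemma trap_iff (S : Set (ZMod n ⊕ ZMod n)) :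
    IsTrap (circWpt n) (circWtp n) S ↔ S.Nonempty ∧
      ∀ i : ZMod n, (Sum.inl i ∈ S ∨ Sum.inr i ∈ S) →
        (Sum.inl (i + 1) ∈ S ∨ Sum.inr (i + 1) ∈ S) := by
  unfold IsTrap
  refine and_congr Iff.rfl ?_
  constructor
  · intro h i hi
    exact (mem_predT S i).1 (h ((mem_succT S i).2 hi))
  · intro h t ht
    exact (mem_predT S t).2 (h t ((mem_succT S t).1 ht))

lemma trap_all [NeZero n] {S : Set (ZMod n ⊕ ZMod n)}
    (hS : IsTrap (circWpt n) (circWtp n) S) :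
    ∀ j : ZMod n, Sum.inl j ∈ S ∨ Sum.inr j ∈ S := by
  rw [trap_iff] at hS
  obtain ⟨⟨p, hp⟩, hcl⟩ := hS
  obtain ⟨i₀, hi₀⟩ : ∃ i₀, Sum.inl i₀ ∈ S ∨ Sum.inr i₀ ∈ S := by
    rcases p with i | i
    · exact ⟨i, Or.inl hp⟩
    · exact ⟨i, Or.inr hp⟩
  have key : ∀ k : ℕ, Sum.inl (i₀ + (k : ZMod n)) ∈ S ∨ Sum.inr (i₀ + (k : ZMod n)) ∈ S := by
    intro k
    induction k with
    | zero => simpa using hi₀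
    | succ k ih =>
      have h2 := hcl _ ih
      have e : i₀ + ((k + 1 : ℕ) : ZMod n) = (i₀ + (k : ZMod n)) + 1 := by
        push_cast; ring
      rwa [e]
  intro j
  obtain ⟨k, hk⟩ := ZMod.natCast_zmod_surjective (n := n) (j - i₀)
  have e : i₀ + (k : ZMod n) = j := by rw [hk]; ring
  rw [← e]
  exact key k

end CircAux

/-- In the circular Petri net, S is a minimal trap iff it contains exactly
one of Aᵢ, Bᵢ for each i; consequently there are exactly 2ⁿ minimal traps. -/
theorem circular_minimal_traps (n : ℕ) (hn : 0 < n) :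
    (∀ S : Set (ZMod n ⊕ ZMod n),
      IsMinimalTrap (circWpt n) (circWtp n) S ↔
        ∀ i : ZMod n,
          (Sum.inl i ∈ S ∧ Sum.inr i ∉ S) ∨ (Sum.inl i ∉ S ∧ Sum.inr i ∈ S)) ∧
    {S : Set (ZMod n ⊕ ZMod n) | IsMinimalTrap (circWpt n) (circWtp n) S}.ncard
      = 2 ^ n := by
  haveI : NeZero n := ⟨hn.ne'⟩
  classical
  have char : ∀ S : Set (ZMod n ⊕ ZMod n),
      IsMinimalTrap (circWpt n) (circWtp n) S ↔
        ∀ i : ZMod n,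
          (Sum.inl i ∈ S ∧ Sum.inr i ∉ S) ∨ (Sum.inl i ∉ S ∧ Sum.inr i ∈ S) := by
    intro S
    constructor
    · rintro ⟨htrap, hmin⟩
      have hall := CircAux.trap_all htrap
      set S' : Set (ZMod n ⊕ ZMod n) :=
        {p | Sum.elim (fun i => Sum.inl i ∈ S)
              (fun i => Sum.inr i ∈ S ∧ Sum.inl i ∉ S) p} with hS'
      have hsub : S' ⊆ S := by
        rintro (i | i) hp
        · exact hp
        · exact hp.1
      have hall' : ∀ i, Sum.inl i ∈ S' ∨ Sum.inr i ∈ S' := by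
        intro i
        by_cases h : Sum.inl i ∈ S
        · exact Or.inl h
        · rcases hall i with h' | h'
          · exact absurd h' h
          · exact Or.inr ⟨h', h⟩
      have htrap' : IsTrap (circWpt n) (circWtp n) S' := by
        rw [CircAux.trap_iff]
        refine ⟨?_, fun i _ => hall' (i + 1)⟩
        rcases hall' 0 with h | h
        · exact ⟨_, h⟩
        · exact ⟨_, h⟩
      have hEq := hmin S' hsub htrap'
      intro i
      by_cases h : Sum.inl i ∈ S
      · refine Or.inl ⟨h, ?_⟩
        rw [← hEq]
        exact fun hm => hm.2 h
      · rcases hall i with h' | h'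
        · exact absurd h' h
        · exact Or.inr ⟨h, h'⟩
    · intro h
      have hall : ∀ i, Sum.inl i ∈ S ∨ Sum.inr i ∈ S := by
        intro i
        rcases h i with ⟨h1, _⟩ | ⟨_, h2⟩
        · exact Or.inl h1
        · exact Or.inr h2
      constructor
      · rw [CircAux.trap_iff]
        refine ⟨?_, fun i _ => hall (i + 1)⟩
        rcases hall 0 with h0 | h0
        · exact ⟨_, h0⟩
        · exact ⟨_, h0⟩
      · intro S' hsub htrap'
        have hall' := CircAux.trap_all htrap'
        apply Set.Subset.antisymm hsub
        rintro (i | i) hp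
        · rcases hall' i with h' | h'
          · exact h'
          · rcases h i with ⟨_, h2⟩ | ⟨h1, _⟩
            · exact absurd (hsub h') h2
            · exact absurd hp h1
        · rcases hall' i with h' | h'
          · rcases h i with ⟨_, h2⟩ | ⟨h1, _⟩
            · exact absurd hp h2
            · exact absurd (hsub h') h1
          · exact h'
  refine ⟨char, ?_⟩
  have hset : {S : Set (ZMod n ⊕ ZMod n) | IsMinimalTrap (circWpt n) (circWtp n) S}
      = Set.range (fun b : ZMod n → Bool =>
          ({p | Sum.elim (fun i => b i = true) (fun i => b i = false) p} :
            Set (ZMod n ⊕ ZMod n))) := by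
    ext S
    simp only [Set.mem_setOf_eq, Set.mem_range, char]
    constructor
    · intro h
      refine ⟨fun i => decide (Sum.inl i ∈ S), ?_⟩
      ext p
      rcases p with i | i
      · simp only [Set.mem_setOf_eq, Sum.elim_inl, decide_eq_true_eq]
      · simp only [Set.mem_setOf_eq, Sum.elim_inr, decide_eq_false_iff_not]
        rcases h i with ⟨h1, h2⟩ | ⟨h1, h2⟩
        · simp [h1, h2]
        · simp [h1, h2]
    · rintro ⟨b, rfl⟩ i
      cases hb : b i
      · exact Or.inr ⟨by simp [Set.mem_setOf_eq, hb], by simp [Set.mem_setOf_eq, hb]⟩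
      · exact Or.inl ⟨by simp [Set.mem_setOf_eq, hb], by simp [Set.mem_setOf_eq, hb]⟩
  rw [hset]
  have hinj : Function.Injective (fun b : ZMod n → Bool =>
      ({p | Sum.elim (fun i => b i = true) (fun i => b i = false) p} :
        Set (ZMod n ⊕ ZMod n))) := by
    intro b b' hbb
    funext i
    have h := Set.ext_iff.mp hbb (Sum.inl i)
    simp only [Set.mem_setOf_eq, Sum.elim_inl] at h
    cases hb : b i <;> cases hb' : b' i <;> simp [hb, hb'] at h ⊢
  rw [← Set.image_univ, Set.ncard_image_of_injective _ hinj, Set.ncard_univ,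
    Nat.card_eq_fintype_card, Fintype.card_fun]
  simp [ZMod.card]
end
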